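/- arXiv:2007.14536 — 8 statements merged into one kernel-verified Lean document; each statement's English description precedes it below -/
import Mathlib

section
/- For matrices A ∈ H^{m×n} and B ∈ H^{m×k} over the quaternions (or over ℂ), rank(A) + rank((I - A A†) B) = rank of the block matrix [A B], where A† is the Moore-Penrose inverse of A. -/
/-!
If `A * G * A = A` then `A * G` is a projection onto the column space of `A`, so the columns of
`(1 - A * G) * B = B - A * (G * B)` span a complement of that column space inside the column space
of `[A B]`. Subtracting `A * (G * B)` from the `B` block is a column operation, so it preserves
the rank of `[A B]`, and ranks add over complementary column spaces.
-/

open Matrix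

namespace Matrix

variable {K : Type*} [Field K] {m n p : Type*} [Fintype n] [Fintype p]

theorem range_mulVecLin_fromCols (A : Matrix m n K) (B : Matrix m p K) :
    LinearMap.range (fromCols A B).mulVecLin =
      LinearMap.range A.mulVecLin ⊔ LinearMap.range B.mulVecLin := by
  have hcol : Set.range (fromCols A B).col = Set.range A.col ∪ Set.range B.col := by
    rw [← Set.Sum.elim_range]
    congr 1
    ext (_ | _) <;> rfl
  rw [range_mulVecLin, range_mulVecLin, range_mulVecLin, hcol, Submodule.span_union]

theorem rank_fromCols_of_disjoint (A : Matrix m n K) (B : Matrix m p K)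
    (h : Disjoint (LinearMap.range A.mulVecLin) (LinearMap.range B.mulVecLin)) :
    (fromCols A B).rank = A.rank + B.rank := by
  have hdim := Submodule.finrank_sup_add_finrank_inf_eq (LinearMap.range A.mulVecLin)
    (LinearMap.range B.mulVecLin)
  rwa [h.eq_bot, finrank_bot, add_zero, ← range_mulVecLin_fromCols] at hdim

theorem rank_fromCols_sub_mul [DecidableEq n] [DecidableEq p]
    (A : Matrix m n K) (B : Matrix m p K) (X : Matrix n p K) :
    (fromCols A (B - A * X)).rank = (fromCols A B).rank := by
  have hcolOp : fromCols A B * (fromBlocks 1 (-X) 0 1 : Matrix (n ⊕ p) (n ⊕ p) K) =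
      fromCols A (B - A * X) := by
    rw [fromCols_mul_fromBlocks]
    simp only [Matrix.mul_one, Matrix.mul_zero, add_zero, Matrix.mul_neg, neg_add_eq_sub]
  rw [← hcolOp]
  refine rank_mul_eq_left_of_isUnit_det _ _ ?_
  rw [det_fromBlocks_zero₂₁, det_one, det_one, mul_one]
  exact isUnit_one

theorem disjoint_range_mulVecLin_one_sub_mul_mul [Fintype m] [DecidableEq m]
    {A : Matrix m n K} {G : Matrix n m K} (hG : A * G * A = A) (B : Matrix m p K) :
    Disjoint (LinearMap.range A.mulVecLin) (LinearMap.range ((1 - A * G) * B).mulVecLin) := by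
  rw [Submodule.disjoint_def]
  rintro x ⟨u, rfl⟩ ⟨w, hw⟩
  simp only [mulVecLin_apply] at hw ⊢
  have hfix : (A * G) *ᵥ (A *ᵥ u) = A *ᵥ u := by rw [mulVec_mulVec, hG]
  have hkill : (A * G) * ((1 - A * G) * B) = 0 := by
    rw [← Matrix.mul_assoc, Matrix.mul_sub, Matrix.mul_one, ← Matrix.mul_assoc, hG, sub_self,
      Matrix.zero_mul]
  rw [← hfix, ← hw, mulVec_mulVec, hkill, zero_mulVec]

end Matrix

theorem stmt0_general {m n k : ℕ}
    (A : Matrix (Fin m) (Fin n) ℂ) (B : Matrix (Fin m) (Fin k) ℂ)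
    (Adag : Matrix (Fin n) (Fin m) ℂ)
    (h1 : A * Adag * A = A) :
    A.rank + ((1 - A * Adag) * B).rank = (Matrix.fromCols A B).rank := by
  have hproj : (1 - A * Adag) * B = B - A * (Adag * B) := by
    rw [Matrix.sub_mul, Matrix.one_mul, Matrix.mul_assoc]
  rw [← rank_fromCols_of_disjoint _ _ (disjoint_range_mulVecLin_one_sub_mul_mul h1 B), hproj,
    rank_fromCols_sub_mul]

/-- Marsaglia–Styan: rank(A) + rank((I - A A†) B) = rank [A B]. -/
theorem stmt0 {m n k : ℕ}
    (A : Matrix (Fin m) (Fin n) ℂ) (B : Matrix (Fin m) (Fin k) ℂ)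
    (Adag : Matrix (Fin n) (Fin m) ℂ)
    (h1 : A * Adag * A = A) (h2 : Adag * A * Adag = Adag)
    (h3 : (A * Adag)ᴴ = A * Adag) (h4 : (Adag * A)ᴴ = Adag * A) :
    A.rank + ((1 - A * Adag) * B).rank = (Matrix.fromCols A B).rank :=
  stmt0_general A B Adag h1
end

section
/- For matrices A ∈ H^{m×n} and C ∈ H^{l×n} over the quaternions (or over ℂ), rank(A) + rank(C (I - A† A)) equals the rank of the vertical block matrix with rows A and C. -/
open Matrix

/-- rank(A) + rank(C (I - A† A)) = rank [A; C]. -/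
theorem stmt1 {m n l : ℕ}
    (A : Matrix (Fin m) (Fin n) ℂ) (C : Matrix (Fin l) (Fin n) ℂ)
    (Adag : Matrix (Fin n) (Fin m) ℂ)
    (h1 : A * Adag * A = A) (h2 : Adag * A * Adag = Adag)
    (h3 : (A * Adag)ᴴ = A * Adag) (h4 : (Adag * A)ᴴ = Adag * A) :
    A.rank + (C * (1 - Adag * A)).rank = (Matrix.fromRows A C).rank := by
  classical
  set P := Adag * A with hP
  have hAL : A * (1 - P) = 0 := by
    rw [Matrix.mul_sub, Matrix.mul_one, hP, ← Matrix.mul_assoc, h1, sub_self]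
  have hPP : P * P = P := by
    rw [hP, Matrix.mul_assoc, ← Matrix.mul_assoc A Adag A, h1]
  have hLP : (1 - P) * P = 0 := by
    rw [Matrix.sub_mul, Matrix.one_mul, hPP, sub_self]
  set U := LinearMap.ker A.mulVecLin with hU
  set V := LinearMap.ker (C * (1 - P)).mulVecLin with hV
  have hsup : U ⊔ V = ⊤ := by
    rw [eq_top_iff]
    intro x _
    have hx : x = (1 - P) *ᵥ x + P *ᵥ x := by
      rw [← Matrix.add_mulVec, sub_add_cancel, Matrix.one_mulVec]
    rw [hx]
    refine Submodule.add_mem _ (Submodule.mem_sup_left ?_) (Submodule.mem_sup_right ?_)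
    · simp only [hU, LinearMap.mem_ker, Matrix.mulVecLin_apply, Matrix.mulVec_mulVec, hAL,
        Matrix.zero_mulVec]
    · simp only [hV, LinearMap.mem_ker, Matrix.mulVecLin_apply, Matrix.mulVec_mulVec,
        Matrix.mul_assoc, hLP, Matrix.mul_zero, Matrix.zero_mulVec]
  have hinf : LinearMap.ker (Matrix.fromRows A C).mulVecLin = U ⊓ V := by
    ext x
    simp only [LinearMap.mem_ker, Matrix.mulVecLin_apply, Submodule.mem_inf, hU, hV]
    constructor
    · intro h
      have hA : A *ᵥ x = 0 := by
        funext i; have := congrFun h (Sum.inl i)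
        simpa [Matrix.fromRows_mulVec] using this
      have hC : C *ᵥ x = 0 := by
        funext i; have := congrFun h (Sum.inr i)
        simpa [Matrix.fromRows_mulVec] using this
      refine ⟨hA, ?_⟩
      have : (C * (1 - P)) *ᵥ x = C *ᵥ x - C *ᵥ (P *ᵥ x) := by
        rw [Matrix.mul_sub, Matrix.mul_one, Matrix.sub_mulVec, Matrix.mulVec_mulVec]
      rw [this, hC, hP, ← Matrix.mulVec_mulVec, hA, Matrix.mulVec_zero,
        Matrix.mulVec_zero, sub_self]
    · rintro ⟨hA, hCL⟩
      have hC : C *ᵥ x = 0 := by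
        have : (C * (1 - P)) *ᵥ x = C *ᵥ x - C *ᵥ (P *ᵥ x) := by
          rw [Matrix.mul_sub, Matrix.mul_one, Matrix.sub_mulVec, Matrix.mulVec_mulVec]
        rw [this, hP, ← Matrix.mulVec_mulVec, hA, Matrix.mulVec_zero,
          Matrix.mulVec_zero, sub_zero] at hCL
        exact hCL
      funext i
      cases i with
      | inl i => simp [Matrix.fromRows_mulVec, hA]
      | inr i => simp [Matrix.fromRows_mulVec, hC]
  have rn1 : A.rank + Module.finrank ℂ U = n := by
    have := LinearMap.finrank_range_add_finrank_ker A.mulVecLin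
    simpa [Matrix.rank, hU] using this
  have rn2 : (C * (1 - P)).rank + Module.finrank ℂ V = n := by
    have := LinearMap.finrank_range_add_finrank_ker (C * (1 - P)).mulVecLin
    simpa [Matrix.rank, hV] using this
  have rn3 : (Matrix.fromRows A C).rank + Module.finrank ℂ (U ⊓ V : Submodule ℂ (Fin n → ℂ)) = n := by
    have := LinearMap.finrank_range_add_finrank_ker (Matrix.fromRows A C).mulVecLin
    rw [hinf] at this
    simpa [Matrix.rank] using this
  have hdim : Module.finrank ℂ ((U ⊔ V : Submodule ℂ (Fin n → ℂ))) +
      Module.finrank ℂ ((U ⊓ V : Submodule ℂ (Fin n → ℂ))) =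
      Module.finrank ℂ U + Module.finrank ℂ V :=
    Submodule.finrank_sup_add_finrank_inf_eq U V
  have htop : Module.finrank ℂ ((U ⊔ V : Submodule ℂ (Fin n → ℂ))) = n := by
    rw [hsup]; simp [finrank_top]
  omega
end

section
/- For matrices A ∈ H^{m×n}, B ∈ H^{m×k}, and C ∈ H^{l×n}, rank(B) + rank((I - B B†) A) = rank(A) + rank((I - A A†) B); that is, the Marsaglia–Styan rank formula is symmetric in A and B. -/
open Matrix

/-- Rank of the image of a submodule: `finrank (map f U) + finrank (U ⊓ ker f) = finrank U`. -/
lemma aux_finrank_map_add {K V W : Type*} [Field K] [AddCommGroup V] [Module K V]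
    [AddCommGroup W] [Module K W] [FiniteDimensional K V]
    (f : V →ₗ[K] W) (U : Submodule K V) :
    Module.finrank K (U.map f) + Module.finrank K (U ⊓ LinearMap.ker f : Submodule K V)
      = Module.finrank K U := by
  have h := LinearMap.finrank_range_add_finrank_ker (f.domRestrict U)
  rw [LinearMap.range_domRestrict, LinearMap.ker_domRestrict] at h
  have hm : (Submodule.comap U.subtype (LinearMap.ker f)).map U.subtype
      = U ⊓ LinearMap.ker f := Submodule.map_comap_subtype _ _
  have he : Module.finrank K (Submodule.comap U.subtype (LinearMap.ker f))
      = Module.finrank K (U ⊓ LinearMap.ker f : Submodule K V) := by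
    rw [← hm]
    exact (Submodule.equivMapOfInjective U.subtype Subtype.val_injective _).finrank_eq
  rw [he] at h
  simpa using h

lemma aux_ker_proj {m k : ℕ} (B : Matrix (Fin m) (Fin k) ℂ)
    (Bdag : Matrix (Fin k) (Fin m) ℂ) (hB1 : B * Bdag * B = B) :
    LinearMap.ker ((1 - B * Bdag) : Matrix (Fin m) (Fin m) ℂ).mulVecLin
      = LinearMap.range B.mulVecLin := by
  ext x
  simp only [LinearMap.mem_ker, LinearMap.mem_range, mulVecLin_apply]
  constructor
  · intro h
    have h' : x = (B * Bdag).mulVec x := by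
      have h0 : x - (B * Bdag).mulVec x = 0 := by
        simpa [Matrix.sub_mulVec, Matrix.one_mulVec] using h
      exact (sub_eq_zero.mp h0)
    exact ⟨Bdag.mulVec x, by rw [mulVec_mulVec]; exact h'.symm⟩
  · rintro ⟨y, rfl⟩
    rw [mulVec_mulVec, Matrix.sub_mul, Matrix.one_mul, hB1, sub_self, zero_mulVec]

/-- rank(B) + rank((I - B B†) A) = rank(A) + rank((I - A A†) B). -/
theorem stmt2 {m n k : ℕ}
    (A : Matrix (Fin m) (Fin n) ℂ) (B : Matrix (Fin m) (Fin k) ℂ)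
    (Adag : Matrix (Fin n) (Fin m) ℂ) (Bdag : Matrix (Fin k) (Fin m) ℂ)
    (hA1 : A * Adag * A = A) (hA2 : Adag * A * Adag = Adag)
    (hA3 : (A * Adag)ᴴ = A * Adag) (hA4 : (Adag * A)ᴴ = Adag * A)
    (hB1 : B * Bdag * B = B) (hB2 : Bdag * B * Bdag = Bdag)
    (hB3 : (B * Bdag)ᴴ = B * Bdag) (hB4 : (Bdag * B)ᴴ = Bdag * B) :
    B.rank + ((1 - B * Bdag) * A).rank = A.rank + ((1 - A * Adag) * B).rank := by
  have h1 : ((1 - B * Bdag) * A).rank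
      = Module.finrank ℂ ((LinearMap.range A.mulVecLin).map
          ((1 - B * Bdag) : Matrix (Fin m) (Fin m) ℂ).mulVecLin) := by
    rw [Matrix.rank, mulVecLin_mul, LinearMap.range_comp]
  have h2 : ((1 - A * Adag) * B).rank
      = Module.finrank ℂ ((LinearMap.range B.mulVecLin).map
          ((1 - A * Adag) : Matrix (Fin m) (Fin m) ℂ).mulVecLin) := by
    rw [Matrix.rank, mulVecLin_mul, LinearMap.range_comp]
  have e1 := aux_finrank_map_add ((1 - B * Bdag) : Matrix (Fin m) (Fin m) ℂ).mulVecLin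
    (LinearMap.range A.mulVecLin)
  have e2 := aux_finrank_map_add ((1 - A * Adag) : Matrix (Fin m) (Fin m) ℂ).mulVecLin
    (LinearMap.range B.mulVecLin)
  rw [aux_ker_proj B Bdag hB1] at e1
  rw [aux_ker_proj A Adag hA1] at e2
  rw [inf_comm] at e2
  have hU : A.rank = Module.finrank ℂ (LinearMap.range A.mulVecLin) := rfl
  have hV : B.rank = Module.finrank ℂ (LinearMap.range B.mulVecLin) := rfl
  rw [h1, h2, hU, hV]
  omega
end

section
/- Let D and B be matrices of compatible sizes and N = D L_B with L_B = I - B† B. Then the rank of the block matrix stacking R_D = I - D D† on top of R_N = I - N N† equals rank(R_N). Consequently there exists a matrix U with R_D = U R_N. -/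
/-!
Since N = D L_B has its columns in the range of D, the projector R_D kills N, so
R_D = R_D R_N. Thus R_D is a left multiple of R_N, and stacking it on R_N adds no rank.
-/

open Matrix

namespace Matrix

variable {R : Type*} [CommRing R] {l m n k : Type*}

theorem rank_fromRows_mul_self [StrongRankCondition R] [Fintype l] [Fintype m] [Fintype n]
    [DecidableEq m] (U : Matrix l m R) (P : Matrix m n R) :
    (fromRows (U * P) P).rank = P.rank := by
  apply le_antisymm
  · calc (fromRows (U * P) P).rank = (fromRows U 1 * P).rank := by
          rw [fromRows_mul, Matrix.one_mul]
      _ ≤ P.rank := rank_mul_le_right _ _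
  · calc P.rank = (fromCols (0 : Matrix m l R) 1 * fromRows (U * P) P : Matrix m n R).rank := by
          rw [fromCols_mul_fromRows, Matrix.zero_mul, Matrix.one_mul, zero_add]
      _ ≤ (fromRows (U * P) P).rank := rank_mul_le_right _ _

theorem mul_one_sub_mul_eq_self_of_mul_eq_zero [Fintype m] [DecidableEq m] [Fintype k]
    {A : Matrix l m R} {N : Matrix m k R} (X : Matrix k m R) (h : A * N = 0) :
    A * (1 - N * X) = A := by
  rw [Matrix.mul_sub, Matrix.mul_one, ← Matrix.mul_assoc, h, Matrix.zero_mul, sub_zero]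

theorem one_sub_mul_mul_mul_eq_zero [Fintype n] [Fintype k] [DecidableEq k]
    {D : Matrix k n R} {G : Matrix n k R} (hG : D * G * D = D) (X : Matrix n m R) :
    (1 - D * G) * (D * X) = 0 := by
  rw [Matrix.sub_mul, Matrix.one_mul, ← Matrix.mul_assoc, hG, sub_self]

end Matrix

theorem stmt5_general {m n p : ℕ}
    (D : Matrix (Fin m) (Fin n) ℂ) (B : Matrix (Fin p) (Fin n) ℂ)
    (Bdag : Matrix (Fin n) (Fin p) ℂ)
    (Ddag : Matrix (Fin n) (Fin m) ℂ)
    (hD1 : D * Ddag * D = D)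
    (N : Matrix (Fin m) (Fin n) ℂ) (hN : N = D * (1 - Bdag * B))
    (Ndag : Matrix (Fin n) (Fin m) ℂ) :
    (Matrix.fromRows (1 - D * Ddag) (1 - N * Ndag)).rank = (1 - N * Ndag).rank ∧
      ∃ U : Matrix (Fin m) (Fin m) ℂ, 1 - D * Ddag = U * (1 - N * Ndag) := by
  have hRD : (1 - D * Ddag) * (1 - N * Ndag) = 1 - D * Ddag :=
    mul_one_sub_mul_eq_self_of_mul_eq_zero Ndag (hN ▸ one_sub_mul_mul_mul_eq_zero hD1 _)
  refine ⟨?_, 1 - D * Ddag, hRD.symm⟩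
  rw [← hRD]
  exact rank_fromRows_mul_self _ _

/-- With N = D L_B, rank [R_D; R_N] = rank R_N, and hence R_D = U R_N for some U. -/
theorem stmt5 {m n p : ℕ}
    (D : Matrix (Fin m) (Fin n) ℂ) (B : Matrix (Fin p) (Fin n) ℂ)
    (Bdag : Matrix (Fin n) (Fin p) ℂ)
    (hB1 : B * Bdag * B = B) (hB2 : Bdag * B * Bdag = Bdag)
    (hB3 : (B * Bdag)ᴴ = B * Bdag) (hB4 : (Bdag * B)ᴴ = Bdag * B)
    (Ddag : Matrix (Fin n) (Fin m) ℂ)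
    (hD1 : D * Ddag * D = D) (hD2 : Ddag * D * Ddag = Ddag)
    (hD3 : (D * Ddag)ᴴ = D * Ddag) (hD4 : (Ddag * D)ᴴ = Ddag * D)
    (N : Matrix (Fin m) (Fin n) ℂ) (hN : N = D * (1 - Bdag * B))
    (Ndag : Matrix (Fin n) (Fin m) ℂ)
    (hN1 : N * Ndag * N = N) (hN2 : Ndag * N * Ndag = Ndag)
    (hN3 : (N * Ndag)ᴴ = N * Ndag) (hN4 : (Ndag * N)ᴴ = Ndag * N) :
    (Matrix.fromRows (1 - D * Ddag) (1 - N * Ndag)).rank = (1 - N * Ndag).rank ∧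
      ∃ U : Matrix (Fin m) (Fin m) ℂ, 1 - D * Ddag = U * (1 - N * Ndag) :=
  stmt5_general D B Bdag Ddag hD1 N hN Ndag
end

section
/- For a matrix A over the quaternions and a nonstandard involution φ of H, rank(A_φ) = rank(A), where A_φ is obtained by applying φ entrywise to the transpose of A. -/
open MulOpposite

section Aux

variable {K K' : Type} [DivisionRing K] [DivisionRing K']

/-- The "row rank": dimension of the left span of the rows of a family of vectors. -/
noncomputable def rrank (K : Type) [DivisionRing K] {ι κ : Type} (A : ι → κ → K) : ℕ :=
  Module.finrank K (Submodule.span K (Set.range A))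

lemma rrank_map_ringEquiv {ι κ : Type} (e : K ≃+* K') (A : ι → κ → K) :
    rrank K' (fun i => e ∘ A i) = rrank K A := by
  haveI := RingHomInvPair.of_ringEquiv e
  haveI := RingHomInvPair.symm (↑e : K →+* K') (e.symm : K' →+* K)
  let f : (κ → K) ≃ₛₗ[(e : K →+* K')] (κ → K') :=
    { toFun := fun v => e ∘ v
      invFun := fun v => e.symm ∘ v
      map_add' := fun u v => funext fun j => map_add e _ _
      map_smul' := fun c v => funext fun j => map_mul e c (v j)
      left_inv := fun v => funext fun j => e.symm_apply_apply _
      right_inv := fun v => funext fun j => e.apply_symm_apply _ }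
  have hmap : (Submodule.span K (Set.range A)).map (f : (κ → K) →ₛₗ[(e : K →+* K')] (κ → K'))
      = Submodule.span K' (Set.range (fun i => e ∘ A i)) := by
    rw [Submodule.map_span, ← Set.range_comp]
    rfl
  let g := f.submoduleMap (Submodule.span K (Set.range A))
  have hrank : Module.rank K (Submodule.span K (Set.range A))
      = Module.rank K' ((Submodule.span K (Set.range A)).map
          (f : (κ → K) →ₛₗ[(e : K →+* K')] (κ → K'))) := by
    refine rank_eq_of_equiv_equiv (⟨e, map_zero e⟩ : ZeroHom K K') g.toAddEquiv
      e.bijective ?_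
    intro r m
    exact g.map_smul' r m
  unfold rrank
  rw [← hmap]
  unfold Module.finrank
  exact (congrArg Cardinal.toNat hrank).symm

lemma rrank_opT_le {ι κ : Type} [Fintype ι] [Fintype κ] (A : ι → κ → K) :
    rrank Kᵐᵒᵖ (fun j i => op (A i j)) ≤ rrank K A := by
  classical
  set p := Submodule.span K (Set.range A) with hp
  have hmem : ∀ i, A i ∈ p := fun i => Submodule.subset_span ⟨i, rfl⟩
  let b := Module.finBasis K p
  set r := Module.finrank K p with hr
  let c : ι → Fin r → K := fun i k => b.repr ⟨A i, hmem i⟩ k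
  have hA : ∀ i j, A i j = ∑ k, c i k * (b k : κ → K) j := by
    intro i j
    have h1 := b.sum_repr ⟨A i, hmem i⟩
    have h2 := congrArg (fun x : p => (x : κ → K) j) h1
    simp only [AddSubmonoidClass.coe_finset_sum, SetLike.val_smul, Finset.sum_apply,
      Pi.smul_apply, smul_eq_mul] at h2
    exact h2.symm
  let w : Fin r → ι → Kᵐᵒᵖ := fun k i => op (c i k)
  have hspan : ∀ j, (fun i => op (A i j)) ∈ Submodule.span Kᵐᵒᵖ (Set.range w) := by
    intro j
    have hrepr : (fun i => op (A i j)) = ∑ k, (op ((b k : κ → K) j)) • w k := by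
      funext i
      simp only [Finset.sum_apply, Pi.smul_apply, smul_eq_mul, w, hA i j]
      rw [Finset.op_sum]
      exact Finset.sum_congr rfl fun k _ => op_mul _ _
    rw [hrepr]
    exact Submodule.sum_mem _ fun k _ =>
      Submodule.smul_mem _ _ (Submodule.subset_span ⟨k, rfl⟩)
  have hle : Submodule.span Kᵐᵒᵖ (Set.range (fun j i => op (A i j)))
      ≤ Submodule.span Kᵐᵒᵖ (Set.range w) :=
    Submodule.span_le.2 (by rintro v ⟨j, rfl⟩; exact hspan j)
  calc rrank Kᵐᵒᵖ (fun j i => op (A i j))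
      ≤ Module.finrank Kᵐᵒᵖ (Submodule.span Kᵐᵒᵖ (Set.range w)) :=
        Submodule.finrank_mono hle
    _ ≤ Fintype.card (Fin r) := finrank_range_le_card w
    _ = r := Fintype.card_fin r

lemma rrank_opT_eq {ι κ : Type} [Fintype ι] [Fintype κ] (A : ι → κ → K) :
    rrank Kᵐᵒᵖ (fun j i => op (A i j)) = rrank K A := by
  refine le_antisymm (rrank_opT_le A) ?_
  have h1 := rrank_opT_le (K := Kᵐᵒᵖ) (fun j i => op (A i j))
  have h2 : rrank Kᵐᵒᵖᵐᵒᵖ (fun i j => op (op (A i j))) = rrank K A := by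
    have := rrank_map_ringEquiv (RingEquiv.opOp K) A
    exact this
  calc rrank K A = rrank Kᵐᵒᵖᵐᵒᵖ (fun i j => op (op (A i j))) := h2.symm
    _ ≤ rrank Kᵐᵒᵖ (fun j i => op (A i j)) := h1

end Aux

/-- The rank of a quaternion matrix: the dimension of the span of its rows
as a left module over the quaternions. -/
noncomputable def qrank {m n : ℕ} (A : Matrix (Fin m) (Fin n) (Quaternion ℝ)) : ℕ :=
  Module.finrank (Quaternion ℝ)
    (Submodule.span (Quaternion ℝ) (Set.range (fun i => A i)))

/-- The φ-transpose of a quaternion matrix: apply φ entrywise to Aᵀ. -/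
def matPhi {m n : ℕ} (φ : Quaternion ℝ → Quaternion ℝ)
    (A : Matrix (Fin m) (Fin n) (Quaternion ℝ)) :
    Matrix (Fin n) (Fin m) (Quaternion ℝ) :=
  Matrix.of fun i j => φ (A j i)

/-- For a nonstandard involution φ, rank(A_φ) = rank(A). -/
theorem stmt6 {m n : ℕ} (φ : Quaternion ℝ → Quaternion ℝ)
    (hadd : ∀ x y, φ (x + y) = φ x + φ y)
    (hmul : ∀ x y, φ (x * y) = φ y * φ x)
    (hinv : ∀ x, φ (φ x) = x)
    (hnonstd : φ ≠ star)
    (A : Matrix (Fin m) (Fin n) (Quaternion ℝ)) :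
    qrank (matPhi φ A) = qrank A := by
  let ψ : (Quaternion ℝ)ᵐᵒᵖ ≃+* Quaternion ℝ :=
    { toFun := fun x => φ x.unop
      invFun := fun x => op (φ x)
      left_inv := fun x => by simp [hinv]
      right_inv := fun x => hinv x
      map_add' := fun x y => hadd _ _
      map_mul' := fun x y => hmul _ _ }
  have key : rrank (Quaternion ℝ) (fun j => ψ ∘ (fun (j : Fin n) (i : Fin m) => op (A i j)) j)
      = rrank (Quaternion ℝ)ᵐᵒᵖ (fun (j : Fin n) (i : Fin m) => op (A i j)) :=
    rrank_map_ringEquiv ψ _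
  have key2 : rrank (Quaternion ℝ)ᵐᵒᵖ (fun (j : Fin n) (i : Fin m) => op (A i j))
      = rrank (Quaternion ℝ) (fun i => A i) := rrank_opT_eq _
  show rrank (Quaternion ℝ) (fun j => (matPhi φ A) j) = rrank (Quaternion ℝ) (fun i => A i)
  rw [← key2, ← key]
  rfl
end

section
/- For a quaternion matrix A and an involution φ, the Moore-Penrose inverse satisfies (A_φ)† = (A†)_φ. -/
open Matrix

lemma matPhi_mul {m n p : ℕ} (φ : Quaternion ℝ → Quaternion ℝ)
    (hadd : ∀ x y, φ (x + y) = φ x + φ y)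
    (hmul : ∀ x y, φ (x * y) = φ y * φ x)
    (A : Matrix (Fin m) (Fin n) (Quaternion ℝ))
    (B : Matrix (Fin n) (Fin p) (Quaternion ℝ)) :
    matPhi φ (A * B) = matPhi φ B * matPhi φ A := by
  refine Matrix.ext fun i j => ?_
  simp only [matPhi, Matrix.of_apply, Matrix.mul_apply]
  rw [show φ = ⇑(AddMonoidHom.mk' φ hadd) from rfl, map_sum]
  exact Finset.sum_congr rfl fun k _ => hmul _ _

lemma matPhi_conjT {m n : ℕ} (φ : Quaternion ℝ → Quaternion ℝ)
    (hstar : ∀ x, φ (star x) = star (φ x))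
    (A : Matrix (Fin m) (Fin n) (Quaternion ℝ)) :
    (matPhi φ A)ᴴ = matPhi φ (Aᴴ) := by
  refine Matrix.ext fun i j => ?_
  simp [matPhi, Matrix.conjTranspose_apply, hstar]

/-- (A_φ)† = (A†)_φ: if Adag is the Moore-Penrose inverse of A and C is a
Moore-Penrose inverse of A_φ, then C = (Adag)_φ. -/
theorem stmt11 {m n : ℕ} (φ : Quaternion ℝ → Quaternion ℝ)
    (hadd : ∀ x y, φ (x + y) = φ x + φ y)
    (hmul : ∀ x y, φ (x * y) = φ y * φ x)
    (hinv : ∀ x, φ (φ x) = x)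
    (hstar : ∀ x, φ (star x) = star (φ x))
    (A : Matrix (Fin m) (Fin n) (Quaternion ℝ))
    (Adag : Matrix (Fin n) (Fin m) (Quaternion ℝ))
    (hA1 : A * Adag * A = A) (hA2 : Adag * A * Adag = Adag)
    (hA3 : (A * Adag)ᴴ = A * Adag) (hA4 : (Adag * A)ᴴ = Adag * A)
    (C : Matrix (Fin m) (Fin n) (Quaternion ℝ))
    (hC1 : matPhi φ A * C * matPhi φ A = matPhi φ A)
    (hC2 : C * matPhi φ A * C = C)
    (hC3 : (matPhi φ A * C)ᴴ = matPhi φ A * C)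
    (hC4 : (C * matPhi φ A)ᴴ = C * matPhi φ A) :
    C = matPhi φ Adag := by
  set X := matPhi φ A with hX
  set B := matPhi φ Adag with hBdef
  -- B satisfies the four Penrose equations for X
  have hXB : X * B = matPhi φ (Adag * A) := by
    rw [matPhi_mul φ hadd hmul]
  have hBX : B * X = matPhi φ (A * Adag) := by
    rw [matPhi_mul φ hadd hmul]
  have hB1 : X * B * X = X := by
    rw [hXB, hX, ← matPhi_mul φ hadd hmul, ← Matrix.mul_assoc, hA1]
  have hB2 : B * X * B = B := by
    rw [hBX, hBdef, ← matPhi_mul φ hadd hmul, ← Matrix.mul_assoc, hA2]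
  have hB3 : (X * B)ᴴ = X * B := by
    rw [hXB, matPhi_conjT φ hstar, hA4]
  have hB4 : (B * X)ᴴ = B * X := by
    rw [hBX, matPhi_conjT φ hstar, hA3]
  -- uniqueness of the Moore–Penrose inverse
  have e1 : X * C = (X * B) * (X * C) := by
    conv_lhs => rw [← hB1]
    simp only [Matrix.mul_assoc]
  have h1 : X * C = X * B := by
    calc X * C = (X * C)ᴴ := hC3.symm
    _ = ((X * B) * (X * C))ᴴ := by rw [← e1]
    _ = (X * C)ᴴ * (X * B)ᴴ := Matrix.conjTranspose_mul _ _
    _ = (X * C) * (X * B) := by rw [hC3, hB3]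
    _ = (X * C * X) * B := by simp only [Matrix.mul_assoc]
    _ = X * B := by rw [hC1]
  have e2 : C * X = (C * X) * (B * X) := by
    conv_lhs => rw [← hB1]
    simp only [Matrix.mul_assoc]
  have h2 : C * X = B * X := by
    calc C * X = (C * X)ᴴ := hC4.symm
    _ = ((C * X) * (B * X))ᴴ := by rw [← e2]
    _ = (B * X)ᴴ * (C * X)ᴴ := Matrix.conjTranspose_mul _ _
    _ = (B * X) * (C * X) := by rw [hC4, hB4]
    _ = B * (X * C * X) := by simp only [Matrix.mul_assoc]
    _ = B * X := by rw [hC1]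
  calc C = C * X * C := hC2.symm
  _ = C * (X * B) := by rw [Matrix.mul_assoc, h1]
  _ = (C * X) * B := by rw [Matrix.mul_assoc]
  _ = (B * X) * B := by rw [h2]
  _ = B := hB2
end

section
/- Let A, B, C, D, F, G, E be matrices over the quaternions (or over ℂ) of compatible sizes. If the matrix equation A X + Y B + C Z₁ D + F Z₂ G = E has a solution (X, Y, Z₁, Z₂), then rank [E A C F; B 0 0 0] = rank [A C F] + rank B. -/
/-!
With `M = [A C F]` and `N = [X; Z₁ D; Z₂ G]` a solution gives `E = Y B + M N`, and then
`[E M; B 0] = [1 Y; 0 1] [0 M; B 0] [1 0; N 1]` with unimodular outer factors, so the rank is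
that of the block anti-diagonal matrix `[0 M; B 0]`.
-/

open Matrix

theorem Submodule.finrank_prod {K M N : Type*} [DivisionRing K] [AddCommGroup M] [AddCommGroup N]
    [Module K M] [Module K N] (p : Submodule K M) (q : Submodule K N) [Module.Finite K p]
    [Module.Finite K q] :
    Module.finrank K (p.prod q) = Module.finrank K p + Module.finrank K q := by
  have hrange : (p.subtype.prodMap q.subtype).range = p.prod q := by
    rw [LinearMap.range_prodMap, Submodule.range_subtype, Submodule.range_subtype]
  rw [← hrange, LinearMap.finrank_range_of_inj
    (Function.Injective.prodMap p.injective_subtype q.injective_subtype), Module.finrank_prod]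

namespace Matrix

variable {K : Type*} [Field K] {l m n o : Type*} [Fintype m] [Fintype o]

theorem mulVecLin_fromBlocks_zero₁₂_zero₂₁ (A : Matrix l m K) (D : Matrix n o K) :
    (fromBlocks A 0 0 D).mulVecLin =
      (LinearEquiv.sumArrowLequivProdArrow l n K K).symm.toLinearMap ∘ₗ
        (A.mulVecLin.prodMap D.mulVecLin) ∘ₗ
          (LinearEquiv.sumArrowLequivProdArrow m o K K).toLinearMap := by
  ext x i
  cases i <;>
    simp [fromBlocks_mulVec, LinearEquiv.sumArrowLequivProdArrow, Equiv.sumArrowEquivProdArrow]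

theorem rank_fromBlocks_zero₁₂_zero₂₁ (A : Matrix l m K) (D : Matrix n o K) :
    (fromBlocks A 0 0 D).rank = A.rank + D.rank := by
  rw [rank, mulVecLin_fromBlocks_zero₁₂_zero₂₁, LinearMap.range_comp, LinearMap.range_comp,
    LinearEquiv.range, Submodule.map_top, LinearEquiv.finrank_map_eq, LinearMap.range_prodMap,
    Submodule.finrank_prod, rank, rank]

theorem rank_fromBlocks_zero₁₁_zero₂₂ (B : Matrix l o K) (C : Matrix n m K) :
    (fromBlocks 0 B C 0).rank = B.rank + C.rank := by
  have hswap : fromBlocks 0 B C 0 =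
      reindex (Equiv.refl _) (Equiv.sumComm o m) (fromBlocks B 0 0 C) := by
    ext (i | i) (j | j) <;> rfl
  rw [hswap, rank_reindex, rank_fromBlocks_zero₁₂_zero₂₁]

theorem rank_fromBlocks_add_mul_zero [Fintype l] [Fintype n] (Y : Matrix l n K)
    (B : Matrix n m K) (M : Matrix l o K) (N : Matrix o m K) :
    (fromBlocks (Y * B + M * N) M B 0).rank = M.rank + B.rank := by
  classical
  have hfactor : fromBlocks (Y * B + M * N) M B 0 =
      (fromBlocks 1 Y 0 1 : Matrix (l ⊕ n) (l ⊕ n) K) * fromBlocks 0 M B 0 *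
        (fromBlocks 1 0 N 1 : Matrix (m ⊕ o) (m ⊕ o) K) := by
    simp [fromBlocks_multiply]
  rw [hfactor, rank_mul_eq_left_of_isUnit_det _ _ (by simp),
    rank_mul_eq_right_of_isUnit_det _ _ (by simp), rank_fromBlocks_zero₁₁_zero₂₂]

end Matrix

/-- If A X + Y B + C Z₁ D + F Z₂ G = E is solvable then
rank [E A C F; B 0 0 0] = rank [A C F] + rank B. -/
theorem stmt13 {mm nn p q r s t u : ℕ}
    (E : Matrix (Fin mm) (Fin nn) ℂ)
    (A : Matrix (Fin mm) (Fin p) ℂ) (B : Matrix (Fin q) (Fin nn) ℂ)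
    (C : Matrix (Fin mm) (Fin r) ℂ) (D : Matrix (Fin s) (Fin nn) ℂ)
    (F : Matrix (Fin mm) (Fin t) ℂ) (G : Matrix (Fin u) (Fin nn) ℂ)
    (X : Matrix (Fin p) (Fin nn) ℂ) (Y : Matrix (Fin mm) (Fin q) ℂ)
    (Z₁ : Matrix (Fin r) (Fin s) ℂ) (Z₂ : Matrix (Fin t) (Fin u) ℂ)
    (hsol : A * X + Y * B + C * Z₁ * D + F * Z₂ * G = E) :
    (Matrix.fromBlocks E (Matrix.fromCols A (Matrix.fromCols C F)) B 0).rank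
      = (Matrix.fromCols A (Matrix.fromCols C F)).rank + B.rank := by
  have hE : E = Y * B +
      fromCols A (fromCols C F) * fromRows X (fromRows (Z₁ * D) (Z₂ * G)) := by
    rw [← hsol, fromCols_mul_fromRows, fromCols_mul_fromRows, Matrix.mul_assoc C,
      Matrix.mul_assoc F]
    abel
  rw [hE, rank_fromBlocks_add_mul_zero]
end

section
/- Let A, B, C, D, E be matrices over ℂ (or H), and set A₁ = R_A C, B₁ = D L_B, E₁ = R_A E L_B, where R_A = I - A A† and L_B = I - B† B. If R_{A₁} E₁ = 0, E₁ L_{B₁} = 0, then X = A†(E - C Z D) - T B + L_A S, Y = R_A (E - C Z D) B† + A T + W R_B with Z = A₁† E₁ B₁† satisfies A X + Y B + C Z D = E. -/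
open Matrix

/-- Closed-form solution of A X + Y B + C Z D = E under the consistency
conditions R_{A₁} E₁ = 0 and E₁ L_{B₁} = 0. -/
theorem stmt16 {mm nn p q r s : ℕ}
    (A : Matrix (Fin mm) (Fin p) ℂ) (B : Matrix (Fin q) (Fin nn) ℂ)
    (C : Matrix (Fin mm) (Fin r) ℂ) (D : Matrix (Fin s) (Fin nn) ℂ)
    (E : Matrix (Fin mm) (Fin nn) ℂ)
    (Adag : Matrix (Fin p) (Fin mm) ℂ) (Bdag : Matrix (Fin nn) (Fin q) ℂ)
    (hA1 : A * Adag * A = A) (hA2 : Adag * A * Adag = Adag)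
    (hA3 : (A * Adag)ᴴ = A * Adag) (hA4 : (Adag * A)ᴴ = Adag * A)
    (hB1 : B * Bdag * B = B) (hB2 : Bdag * B * Bdag = Bdag)
    (hB3 : (B * Bdag)ᴴ = B * Bdag) (hB4 : (Bdag * B)ᴴ = Bdag * B)
    (A₁ : Matrix (Fin mm) (Fin r) ℂ) (hA₁ : A₁ = (1 - A * Adag) * C)
    (B₁ : Matrix (Fin s) (Fin nn) ℂ) (hB₁ : B₁ = D * (1 - Bdag * B))
    (E₁ : Matrix (Fin mm) (Fin nn) ℂ)
    (hE₁ : E₁ = (1 - A * Adag) * E * (1 - Bdag * B))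
    (A₁dag : Matrix (Fin r) (Fin mm) ℂ) (B₁dag : Matrix (Fin nn) (Fin s) ℂ)
    (hA₁1 : A₁ * A₁dag * A₁ = A₁) (hA₁2 : A₁dag * A₁ * A₁dag = A₁dag)
    (hA₁3 : (A₁ * A₁dag)ᴴ = A₁ * A₁dag) (hA₁4 : (A₁dag * A₁)ᴴ = A₁dag * A₁)
    (hB₁1 : B₁ * B₁dag * B₁ = B₁) (hB₁2 : B₁dag * B₁ * B₁dag = B₁dag)
    (hB₁3 : (B₁ * B₁dag)ᴴ = B₁ * B₁dag) (hB₁4 : (B₁dag * B₁)ᴴ = B₁dag * B₁)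
    (hc1 : (1 - A₁ * A₁dag) * E₁ = 0) (hc2 : E₁ * (1 - B₁dag * B₁) = 0)
    (T : Matrix (Fin p) (Fin q) ℂ) (S : Matrix (Fin p) (Fin nn) ℂ)
    (W : Matrix (Fin mm) (Fin q) ℂ)
    (Z : Matrix (Fin r) (Fin s) ℂ) (hZ : Z = A₁dag * E₁ * B₁dag)
    (X : Matrix (Fin p) (Fin nn) ℂ)
    (hX : X = Adag * (E - C * Z * D) - T * B + (1 - Adag * A) * S)
    (Y : Matrix (Fin mm) (Fin q) ℂ)
    (hY : Y = (1 - A * Adag) * (E - C * Z * D) * Bdag + A * T + W * (1 - B * Bdag)) :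
    A * X + Y * B + C * Z * D = E := by
  simp only [Matrix.sub_mul, Matrix.mul_sub, Matrix.one_mul, Matrix.mul_one] at hc1 hc2
  have hc1' : A₁ * A₁dag * E₁ = E₁ := (sub_eq_zero.mp hc1).symm
  have hc2' : E₁ * (B₁dag * B₁) = E₁ := (sub_eq_zero.mp hc2).symm
  have hAZ : A₁ * Z * B₁ = E₁ := by
    rw [hZ]
    calc A₁ * (A₁dag * E₁ * B₁dag) * B₁
        = A₁ * A₁dag * E₁ * (B₁dag * B₁) := by simp only [Matrix.mul_assoc]
      _ = E₁ := by rw [hc1', hc2']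
  have key : (1 - A * Adag) * (E - C * Z * D) * (1 - Bdag * B) = 0 := by
    have h2 : (1 - A * Adag) * (E - C * Z * D) * (1 - Bdag * B)
        = E₁ - A₁ * Z * B₁ := by
      rw [hE₁, hA₁, hB₁]
      simp only [Matrix.mul_sub, Matrix.sub_mul, Matrix.mul_one, Matrix.one_mul,
        Matrix.mul_assoc]
      abel
    rw [h2, hAZ, sub_self]
  have key' : (1 - A * Adag) * (E - C * Z * D) * (Bdag * B)
      = (1 - A * Adag) * (E - C * Z * D) := by
    have h := key
    rw [Matrix.mul_sub, Matrix.mul_one, sub_eq_zero] at h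
    exact h.symm
  have hA1' : A * (Adag * A) = A := by rw [← Matrix.mul_assoc, hA1]
  have z1 : A * ((1 - Adag * A) * S) = 0 := by
    rw [← Matrix.mul_assoc, Matrix.mul_sub, Matrix.mul_one, hA1', sub_self,
      Matrix.zero_mul]
  have z2 : W * (1 - B * Bdag) * B = 0 := by
    rw [Matrix.mul_assoc, Matrix.sub_mul, Matrix.one_mul, hB1, sub_self,
      Matrix.mul_zero]
  have e1 : A * Adag * (E - C * Z * D)
      + (1 - A * Adag) * (E - C * Z * D) * (Bdag * B) = E - C * Z * D := by
    rw [key', Matrix.sub_mul, Matrix.one_mul]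
    abel
  have expand : A * X + Y * B + C * Z * D
      = (A * Adag * (E - C * Z * D)
          + (1 - A * Adag) * (E - C * Z * D) * (Bdag * B))
        + A * ((1 - Adag * A) * S) + W * (1 - B * Bdag) * B + C * Z * D := by
    rw [hX, hY]
    simp only [Matrix.mul_add, Matrix.add_mul, Matrix.mul_sub, Matrix.sub_mul,
      Matrix.mul_one, Matrix.one_mul, Matrix.mul_assoc]
    abel
  rw [expand, e1, z1, z2, add_zero, add_zero]
  abel
end
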